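/- Let n₁, …, n_K be positive integers and let G = ∏_{i=1}^K ℤ/n_iℤ. Then the second group cohomology of G with coefficients in the circle group ℝ/ℤ, endowed with the trivial G-action, is isomorphic as an abelian group to ∏_{1 ≤ i < j ≤ K} ℤ/gcd(n_i,n_j)ℤ, i.e. H²(G, ℝ/ℤ) ≅ ∏_{i<j} ℤ/gcd(n_i,n_j)ℤ. -/

import Mathlib

open groupCohomology
namespace S18
variable {G M : Type*} [AddCommGroup G] [AddCommGroup M]

/-- 2-cocycle condition (additive notation, trivial action). -/
def IsCo (c : G × G → M) : Prop :=
  ∀ g h j : G, c (g + h, j) + c (g, h) = c (h, j) + c (g, h + j)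

/-- 2-coboundary (additive notation, trivial action). -/
def IsCb (c : G × G → M) : Prop :=
  ∃ x : G → M, ∀ g h : G, x h - x (g + h) + x g = c (g, h)

lemma isCo_comp {H : Type*} [AddCommGroup H] {c : G × G → M} (φ : H →+ G) (hc : IsCo c) :
    IsCo (fun p : H × H => c (φ p.1, φ p.2)) := by
  intro g h j
  simpa [map_add] using hc (φ g) (φ h) (φ j)

lemma isCb_comp_equiv {H : Type*} [AddCommGroup H] {c : G × G → M} (e : H ≃+ G)
    (h : IsCb (fun p : H × H => c (e p.1, e p.2))) : IsCb c := by
  obtain ⟨x, hx⟩ := h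
  refine ⟨fun g => x (e.symm g), fun g h => ?_⟩
  have := hx (e.symm g) (e.symm h)
  simpa [map_add] using this

lemma isCo_sub {c c' : G × G → M} (hc : IsCo c) (hc' : IsCo c') : IsCo (c - c') := by
  intro g h j
  have h1 := hc g h j
  have h2 := hc' g h j
  simp only [Pi.sub_apply]
  rw [sub_add_sub_comm, h1, sub_add_sub_comm, h2]

lemma isCo_d (x : G → M) : IsCo (fun p : G × G => x p.2 - x (p.1 + p.2) + x p.1) := by
  intro g h j
  simp only []
  rw [add_assoc g h j]
  abel

lemma isCb_sub_of_isCb {c c' : G × G → M} (hc : IsCb c) (hc' : IsCb c') : IsCb (c - c') := by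
  obtain ⟨x, hx⟩ := hc
  obtain ⟨y, hy⟩ := hc'
  refine ⟨x - y, fun g h => ?_⟩
  simp only [Pi.sub_apply, ← hx g h, ← hy g h]
  abel

lemma isCb_add {c c' : G × G → M} (hc : IsCb c) (hc' : IsCb c') : IsCb (c + c') := by
  obtain ⟨x, hx⟩ := hc
  obtain ⟨y, hy⟩ := hc'
  refine ⟨x + y, fun g h => ?_⟩
  simp only [Pi.add_apply, ← hx g h, ← hy g h]
  abel

lemma cyclic_isCb (n : ℕ) (hn : 0 < n) (c : ZMod n × ZMod n → AddCircle (1 : ℝ))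
    (hc : IsCo c) : IsCb c := by
  haveI : NeZero n := ⟨hn.ne'⟩
  set κ := c (0, 0) with hκdef
  have hκ : ∀ l : ZMod n, c (0, l) = κ := by
    intro l
    have h := hc 0 0 l
    simp only [add_zero, zero_add] at h
    exact (add_left_cancel h).symm
  set F : ℕ → AddCircle (1 : ℝ) := fun k => ∑ j ∈ Finset.range k, c (1, (j : ZMod n)) with hF
  have key : ∀ k l : ℕ, c ((k : ZMod n), (l : ZMod n)) = κ + F (k + l) - F k - F l := by
    intro k
    induction k with
    | zero =>
      intro l
      simp [hκ, F]
    | succ k ih =>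
      intro l
      have step := hc 1 (k : ZMod n) (l : ZMod n)
      have h1 : ((1 : ZMod n) + (k : ZMod n)) = ((k + 1 : ℕ) : ZMod n) := by push_cast; ring
      have h2 : ((k : ZMod n) + (l : ZMod n)) = ((k + l : ℕ) : ZMod n) := by push_cast; ring
      rw [h1, h2] at step
      have e : c (((k + 1 : ℕ) : ZMod n), (l : ZMod n)) =
          (c ((k : ZMod n), (l : ZMod n)) + c (1, ((k + l : ℕ) : ZMod n)))
            - c (1, (k : ZMod n)) := eq_sub_iff_add_eq.2 step
      rw [e, ih l]
      have hFk : F (k + 1) = F k + c (1, (k : ZMod n)) := Finset.sum_range_succ _ _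
      have hFkl : F (k + 1 + l) = F (k + l) + c (1, ((k + l : ℕ) : ZMod n)) := by
        have : k + 1 + l = (k + l) + 1 := by omega
        rw [this]
        exact Finset.sum_range_succ _ _
      rw [hFk, hFkl]
      abel
  have hFs : ∀ k, F (k + 1) = F k + c (1, (k : ZMod n)) := fun k => Finset.sum_range_succ _ _
  have hF0 : F 0 = 0 := Finset.sum_range_zero _
  have Fper : ∀ m, F (n + m) = F n + F m := by
    intro m
    induction m with
    | zero => simp [hF0]
    | succ m ih =>
      have h1 : n + (m + 1) = (n + m) + 1 := by omega
      have h2 : ((n + m : ℕ) : ZMod n) = ((m : ℕ) : ZMod n) := by push_cast; simp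
      rw [h1, hFs, h2, ih, hFs]
      abel
  have Fq : ∀ q k, F (n * q + k) = F k + q • F n := by
    intro q
    induction q with
    | zero => simp
    | succ q ih =>
      intro k
      have h1 : n * (q + 1) + k = n + (n * q + k) := by ring
      rw [h1, Fper, ih k, succ_nsmul]
      abel
  obtain ⟨r, hr⟩ : ∃ r : ℝ, ((r : ℝ) : AddCircle (1 : ℝ)) = F n :=
    QuotientAddGroup.mk_surjective (F n)
  set τ : AddCircle (1 : ℝ) := ((r / n : ℝ) : AddCircle (1 : ℝ)) with hτdef
  have hτ : n • τ = F n := by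
    rw [hτdef, ← AddCircle.coe_nsmul, nsmul_eq_mul, mul_div_cancel₀]
    · exact hr
    · exact_mod_cast hn.ne'
  have hg : ∀ g : ZMod n, ((g.val : ℕ) : ZMod n) = g := fun g => ZMod.natCast_rightInverse g
  refine ⟨fun z => κ + z.val • τ - F z.val, fun g h => ?_⟩
  show (κ + h.val • τ - F h.val) - (κ + (g + h).val • τ - F (g + h).val)
      + (κ + g.val • τ - F g.val) = c (g, h)
  have hval : (g + h).val = (g.val + h.val) % n := ZMod.val_add g h
  have hc' : c (g, h) = κ + F (g.val + h.val) - F g.val - F h.val := by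
    conv_lhs => rw [← hg g, ← hg h]
    exact key g.val h.val
  have hFab : F (g.val + h.val) = F ((g.val + h.val) % n) + ((g.val + h.val) / n) • F n := by
    conv_lhs => rw [← Nat.div_add_mod (g.val + h.val) n]
    rw [Fq]
  have hτ2 : g.val • τ + h.val • τ
      = ((g.val + h.val) / n) • F n + ((g.val + h.val) % n) • τ := by
    rw [← add_nsmul]
    conv_lhs => rw [← Nat.div_add_mod (g.val + h.val) n]
    rw [add_nsmul, mul_nsmul, hτ]
  have h3 : ((g.val + h.val) / n) • F n
      = (g.val • τ + h.val • τ) - ((g.val + h.val) % n) • τ := eq_sub_of_add_eq hτ2.symm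
  rw [hc', hval, hFab, h3]
  abel


/-- Key step: a symmetric cocycle on `A × B` that vanishes on both factors is a coboundary. -/
lemma prod_isCb_aux {A B : Type*} [AddCommGroup A] [AddCommGroup B]
    (c : (A × B) × (A × B) → M) (hc : IsCo c)
    (hsym : ∀ a b', c ((0, b'), (a, 0)) = c ((a, 0), (0, b')))
    (h1 : ∀ a a' : A, c ((a, 0), (a', 0)) = 0)
    (h2 : ∀ b b' : B, c ((0, b), (0, b')) = 0) : IsCb c := by
  set β : A → B → M := fun a b => c ((a, 0), (0, b)) with hβ
  have e1 : ∀ a b b', c ((a, b), (0, b')) = β a (b + b') - β a b := by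
    intro a b b'
    have h := hc (a, 0) (0, b) (0, b')
    simp only [Prod.mk_add_mk, add_zero, zero_add] at h
    rw [h2 b b', zero_add] at h
    exact eq_sub_of_add_eq h
  have e2 : ∀ a b a', c ((a, b), (a', 0)) = β (a + a') b - β a b := by
    intro a b a'
    have h := hc (0, b) (a, 0) (a', 0)
    simp only [Prod.mk_add_mk, add_zero, zero_add] at h
    rw [h1 a a', zero_add, hsym a b, hsym (a + a') b] at h
    exact eq_sub_of_add_eq h
  have e3 : ∀ a b a' b', c ((a, b), (a', b')) = β (a + a') (b + b') - β a b - β a' b' := by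
    intro a b a' b'
    have h := hc (a, b) (a', 0) (0, b')
    simp only [Prod.mk_add_mk, add_zero, zero_add] at h
    rw [e1 (a + a') b b', e2 a b a'] at h
    have h' := eq_sub_of_add_eq' h.symm
    rw [h']
    abel
  refine ⟨fun p => -β p.1 p.2, fun g h => ?_⟩
  obtain ⟨a, b⟩ := g
  obtain ⟨a', b'⟩ := h
  show -β a' b' - -β (a + a') (b + b') + -β a b = _
  rw [e3 a b a' b']
  abel

variable {M : Type*} [AddCommGroup M]

lemma prod_isCb {A B : Type*} [AddCommGroup A] [AddCommGroup B]
    (c : (A × B) × (A × B) → M) (hc : IsCo c) (hsym : ∀ u v, c (u, v) = c (v, u))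
    (h1 : IsCb (fun p : A × A => c ((p.1, 0), (p.2, 0))))
    (h2 : IsCb (fun p : B × B => c ((0, p.1), (0, p.2)))) : IsCb c := by
  obtain ⟨x₁, hx₁⟩ := h1
  obtain ⟨x₂, hx₂⟩ := h2
  simp only at hx₁ hx₂
  have hx10 : x₁ 0 = c ((0, 0), (0, 0)) := by
    have := hx₁ 0 0
    simpa using this
  have hx20 : x₂ 0 = c ((0, 0), (0, 0)) := by
    have := hx₂ 0 0
    simpa [Prod.ext_iff] using this
  set y : A × B → M := fun p => x₁ p.1 + x₂ p.2 - c ((0, 0), (0, 0)) with hy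
  set dy : (A × B) × (A × B) → M := fun p => y p.2 - y (p.1 + p.2) + y p.1 with hdy
  have hdyCb : IsCb dy := ⟨y, fun g h => rfl⟩
  have hdysym : ∀ u v, dy (u, v) = dy (v, u) := by
    intro u v
    simp only [hdy, add_comm u v]
    abel
  set c' := c - dy with hc'def
  have hc' : IsCo c' := by
    intro g h j
    have h1 := hc g h j
    have h2 := isCo_d y g h j
    simp only [hc'def, Pi.sub_apply]
    rw [sub_add_sub_comm, h1, sub_add_sub_comm, h2]
  have key : IsCb c' := by
    apply prod_isCb_aux c' hc'
    · intro a b'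
      simp only [hc'def, Pi.sub_apply, hsym ((0 : A), b') ((a : A), (0 : B)), hdysym]
    · intro a a'
      simp only [hc'def, Pi.sub_apply, hdy, hy, Prod.mk_add_mk, add_zero, hx20]
      rw [← hx₁ a a']
      abel
    · intro b b'
      simp only [hc'def, Pi.sub_apply, hdy, hy, Prod.mk_add_mk, add_zero, zero_add, hx10]
      rw [← hx₂ b b']
      abel
  obtain ⟨z, hz⟩ := key
  refine ⟨fun p => z p + y p, fun g h => ?_⟩
  have h1 := hz g h
  simp only [hc'def, Pi.sub_apply, hdy] at h1
  have : (z h + y h) - (z (g + h) + y (g + h)) + (z g + y g)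
      = (z h - z (g + h) + z g) + (y h - y (g + h) + y g) := by abel
  rw [this, h1]
  abel

/-- The `Fin (K+1)` splitting equivalence. -/
def finSplit (K : ℕ) (m : Fin (K + 1) → ℕ) :
    (∀ i : Fin (K + 1), ZMod (m i)) ≃+ ((∀ i : Fin K, ZMod (m i.succ)) × ZMod (m 0)) where
  toFun g := (fun i => g i.succ, g 0)
  invFun p := Fin.cons p.2 p.1
  left_inv g := by
    funext i
    refine Fin.cases ?_ (fun i => ?_) i <;> simp
  right_inv p := by
    ext i <;> simp
  map_add' g g' := rfl

lemma pi_isCb : ∀ (K : ℕ) (n : Fin K → ℕ), (∀ i, 0 < n i) →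
    ∀ (c : (∀ i, ZMod (n i)) × (∀ i, ZMod (n i)) → AddCircle (1 : ℝ)),
    IsCo c → (∀ u v, c (u, v) = c (v, u)) → IsCb c := by
  intro K
  induction K with
  | zero =>
    intro n _ c _ _
    refine ⟨fun _ => c (0, 0), fun g h => ?_⟩
    have hz : ∀ z : (∀ i : Fin 0, ZMod (n i)), z = 0 := fun z => Subsingleton.elim _ _
    rw [hz g, hz h]
    simp
  | succ K ih =>
    intro n hn c hc hsym
    set e := finSplit K n with he
    set c'' : ((∀ i : Fin K, ZMod (n i.succ)) × ZMod (n 0)) ×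
        ((∀ i : Fin K, ZMod (n i.succ)) × ZMod (n 0)) → AddCircle (1 : ℝ) :=
      fun p => c (e.symm p.1, e.symm p.2) with hc''
    have hco'' : IsCo c'' := isCo_comp e.symm.toAddMonoidHom hc
    have hsym'' : ∀ u v, c'' (u, v) = c'' (v, u) := fun u v => hsym _ _
    have hr1 : IsCb (fun p : (∀ i : Fin K, ZMod (n i.succ)) × (∀ i : Fin K, ZMod (n i.succ)) =>
        c'' ((p.1, 0), (p.2, 0))) := by
      apply ih (fun i => n i.succ) (fun i => hn i.succ)
      · exact isCo_comp ((e.symm.toAddMonoidHom).comp (AddMonoidHom.inl _ _)) hc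
      · intro u v
        exact hsym _ _
    have hr2 : IsCb (fun p : ZMod (n 0) × ZMod (n 0) => c'' ((0, p.1), (0, p.2))) := by
      apply cyclic_isCb (n 0) (hn 0)
      exact isCo_comp ((e.symm.toAddMonoidHom).comp (AddMonoidHom.inr _ _)) hc
    have := prod_isCb c'' hco'' hsym'' hr1 hr2
    exact isCb_comp_equiv e.symm this



lemma beta_add_left {c : G × G → M} (hc : IsCo c) (g h j : G) :
    c (g + h, j) - c (j, g + h) = (c (g, j) - c (j, g)) + (c (h, j) - c (j, h)) := by
  have e1 := hc g h j
  have e2 := hc j g h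
  have e3 := hc g j h
  rw [add_comm j g] at e2
  rw [add_comm j h] at e3
  have h1 : c (g + h, j) = (c (h, j) + c (g, h + j)) - c (g, h) := eq_sub_iff_add_eq.2 e1
  have h2 : c (j, g + h) = (c (g + j, h) + c (j, g)) - c (g, h) :=
    eq_sub_iff_add_eq.2 (by rw [add_comm (c (j, g + h)) (c (g, h))]; exact e2.symm)
  have h3 : c (g, h + j) = (c (g + j, h) + c (g, j)) - c (j, h) :=
    eq_sub_iff_add_eq.2 (by rw [add_comm (c (g, h + j)) (c (j, h))]; exact e3.symm)
  rw [h1, h3, h2]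
  abel

/-- The antisymmetrization of a 2-cocycle on an abelian group, as a bi-additive map. -/
def betaHom {c : G × G → M} (hc : IsCo c) : G →+ G →+ M :=
  AddMonoidHom.mk' (fun g => AddMonoidHom.mk' (fun h => c (g, h) - c (h, g)) (by
    intro h h'
    have key := beta_add_left hc h h' g
    have := congrArg (fun t => -t) key
    simp only [neg_sub, neg_add] at this
    show c (g, h + h') - c (h + h', g) = _
    rw [this]))
    (by
      intro g g'
      ext h
      exact beta_add_left hc g g' h)

lemma betaHom_apply {c : G × G → M} (hc : IsCo c) (g h : G) :
    betaHom hc g h = c (g, h) - c (h, g) := rfl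

lemma zsmul_congr {m : ℕ} {x : M} (hx : m • x = 0) {z w : ℤ} (h : z ≡ w [ZMOD m]) :
    z • x = w • x := by
  obtain ⟨t, ht⟩ : (m : ℤ) ∣ z - w := Int.ModEq.dvd h.symm
  have hz : z = w + (m : ℤ) * t := by linarith
  rw [hz, add_zsmul, mul_comm, mul_zsmul, natCast_zsmul, hx, smul_zero, add_zero]

section Pi
variable {K : ℕ} {n : Fin K → ℕ} {M : Type*} [AddCommGroup M]

lemma pi_decomp (hn : ∀ i, 0 < n i) (g : ∀ i, ZMod (n i)) :
    g = ∑ i, (g i).val • (Pi.single i (1 : ZMod (n i)) : ∀ i, ZMod (n i)) := by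
  have h1 : ∀ i : Fin K, (Pi.single i (g i) : ∀ i, ZMod (n i))
      = (g i).val • (Pi.single i (1 : ZMod (n i)) : ∀ i, ZMod (n i)) := by
    intro i
    haveI : NeZero (n i) := ⟨(hn i).ne'⟩
    have h2 : g i = (g i).val • (1 : ZMod (n i)) := by
      rw [nsmul_eq_mul, mul_one]; exact (ZMod.natCast_rightInverse (g i)).symm
    conv_lhs => rw [h2]
    exact map_nsmul (AddMonoidHom.single (fun i => ZMod (n i)) i) ((g i).val) 1
  conv_lhs => rw [← Finset.univ_sum_single g]
  exact Finset.sum_congr rfl fun i _ => h1 i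

lemma pi_hom_ext (hn : ∀ i, 0 < n i) (φ ψ : (∀ i, ZMod (n i)) →+ M)
    (h : ∀ i, φ (Pi.single i 1) = ψ (Pi.single i 1)) : φ = ψ := by
  refine AddMonoidHom.ext fun g => ?_
  conv_lhs => rw [pi_decomp hn g]
  conv_rhs => rw [pi_decomp hn g]
  rw [map_sum, map_sum]
  exact Finset.sum_congr rfl fun i _ => by rw [map_nsmul, map_nsmul, h i]

lemma pi_bihom_ext (hn : ∀ i, 0 < n i) (B C : (∀ i, ZMod (n i)) →+ ((∀ i, ZMod (n i)) →+ M))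
    (h : ∀ i k, B (Pi.single i 1) (Pi.single k 1) = C (Pi.single i 1) (Pi.single k 1)) :
    B = C := by
  apply pi_hom_ext hn
  intro i
  exact pi_hom_ext hn _ _ (h i)

end Pi
lemma nsmul_congr {m : ℕ} {x : M} (hx : m • x = 0) {a b : ℕ} (h : a ≡ b [MOD m]) :
    a • x = b • x := by
  have key : ∀ t : ℕ, t • x = (t % m) • x := by
    intro t
    conv_lhs => rw [← Nat.div_add_mod t m]
    rw [add_nsmul, mul_nsmul, hx, smul_zero, zero_add]
  have h' : a % m = b % m := h
  rw [key a, key b, h']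

lemma torsion_rep {d : ℕ} (hd : 0 < d) {x : AddCircle (1 : ℝ)} (hx : d • x = 0) :
    ∃ z : ℤ, x = z • (((1 : ℝ) / (d : ℝ) : ℝ) : AddCircle (1 : ℝ)) := by
  obtain ⟨r, hr⟩ := QuotientAddGroup.mk_surjective x
  have h1 : (((d : ℕ) • r : ℝ) : AddCircle (1 : ℝ)) = 0 := by
    rw [AddCircle.coe_nsmul, hr, hx]
  have h2 : ((d : ℕ) • r : ℝ) ∈ AddSubgroup.zmultiples (1 : ℝ) :=
    (QuotientAddGroup.eq_zero_iff _).1 h1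
  obtain ⟨z, hz⟩ := (AddSubgroup.mem_zmultiples_iff).1 h2
  have hdR : (d : ℝ) ≠ 0 := by exact_mod_cast hd.ne'
  have hz' : (z : ℝ) = d * r := by
    rw [zsmul_eq_mul, mul_one] at hz
    rw [hz, nsmul_eq_mul]
  have hr' : r = (z : ℝ) / d := by
    rw [hz']
    field_simp
  refine ⟨z, ?_⟩
  rw [← hr, hr', ← AddCircle.coe_zsmul]
  congr 1
  rw [zsmul_eq_mul]
  ring



section CB
variable {K : ℕ} (n : Fin K → ℕ)

abbrev PP (K : ℕ) := {q : Fin K × Fin K // q.1 < q.2}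

def dd (ij : PP K) : ℕ := Nat.gcd (n ij.1.1) (n ij.1.2)

noncomputable def ξξ (ij : PP K) : AddCircle (1 : ℝ) := (((1 : ℝ) / (dd n ij : ℝ) : ℝ) : AddCircle (1 : ℝ))

lemma dd_pos (hn : ∀ i, 0 < n i) (ij : PP K) : 0 < dd n ij := Nat.gcd_pos_of_pos_left _ (hn _)

lemma ξξ_order (hn : ∀ i, 0 < n i) (ij : PP K) : addOrderOf (ξξ n ij) = dd n ij :=
  AddCircle.addOrderOf_period_div (dd_pos n hn ij)

lemma ξξ_zero (hn : ∀ i, 0 < n i) (ij : PP K) : dd n ij • ξξ n ij = 0 := by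
  rw [← ξξ_order n hn ij]
  exact addOrderOf_nsmul_eq_zero _

noncomputable def cb (b : ∀ ij : PP K, ZMod (dd n ij)) :
    (∀ i, ZMod (n i)) × (∀ i, ZMod (n i)) → AddCircle (1 : ℝ) := fun p =>
  ∑ ij : PP K, ((b ij).val * (p.1 ij.1.1).val * (p.2 ij.1.2).val) • ξξ n ij

lemma cb_addL (hn : ∀ i, 0 < n i) (b : ∀ ij : PP K, ZMod (dd n ij)) (g g' h : ∀ i, ZMod (n i)) :
    cb n b (g + g', h) = cb n b (g, h) + cb n b (g', h) := by
  rw [cb, cb, cb, ← Finset.sum_add_distrib]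
  refine Finset.sum_congr rfl fun ij _ => ?_
  haveI : NeZero (n ij.1.1) := ⟨(hn _).ne'⟩
  have hmod : ((g + g') ij.1.1).val ≡ (g ij.1.1).val + (g' ij.1.1).val [MOD dd n ij] := by
    refine Nat.ModEq.of_dvd (Nat.gcd_dvd_left _ _) ?_
    show ((g ij.1.1 + g' ij.1.1).val) ≡ _ [MOD n ij.1.1]
    rw [ZMod.val_add]
    exact Nat.mod_modEq _ _
  have hcoef : (b ij).val * ((g + g') ij.1.1).val * (h ij.1.2).val
      ≡ (b ij).val * ((g ij.1.1).val + (g' ij.1.1).val) * (h ij.1.2).val [MOD dd n ij] :=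
    (hmod.mul_left _).mul_right _
  rw [nsmul_congr (ξξ_zero n hn ij) hcoef]
  have : (b ij).val * ((g ij.1.1).val + (g' ij.1.1).val) * (h ij.1.2).val
      = (b ij).val * (g ij.1.1).val * (h ij.1.2).val
        + (b ij).val * (g' ij.1.1).val * (h ij.1.2).val := by ring
  rw [this, add_nsmul]

lemma cb_addR (hn : ∀ i, 0 < n i) (b : ∀ ij : PP K, ZMod (dd n ij)) (g h h' : ∀ i, ZMod (n i)) :
    cb n b (g, h + h') = cb n b (g, h) + cb n b (g, h') := by
  rw [cb, cb, cb, ← Finset.sum_add_distrib]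
  refine Finset.sum_congr rfl fun ij _ => ?_
  haveI : NeZero (n ij.1.2) := ⟨(hn _).ne'⟩
  have hmod : ((h + h') ij.1.2).val ≡ (h ij.1.2).val + (h' ij.1.2).val [MOD dd n ij] := by
    refine Nat.ModEq.of_dvd (Nat.gcd_dvd_right _ _) ?_
    show ((h ij.1.2 + h' ij.1.2).val) ≡ _ [MOD n ij.1.2]
    rw [ZMod.val_add]
    exact Nat.mod_modEq _ _
  have hcoef : (b ij).val * (g ij.1.1).val * ((h + h') ij.1.2).val
      ≡ (b ij).val * (g ij.1.1).val * ((h ij.1.2).val + (h' ij.1.2).val) [MOD dd n ij] :=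
    Nat.ModEq.mul_left _ hmod
  rw [nsmul_congr (ξξ_zero n hn ij) hcoef]
  have : (b ij).val * (g ij.1.1).val * ((h ij.1.2).val + (h' ij.1.2).val)
      = (b ij).val * (g ij.1.1).val * (h ij.1.2).val
        + (b ij).val * (g ij.1.1).val * (h' ij.1.2).val := by ring
  rw [this, add_nsmul]

lemma cb_isCo (hn : ∀ i, 0 < n i) (b : ∀ ij : PP K, ZMod (dd n ij)) :
    IsCo (cb n b) := by
  intro g h j
  rw [cb_addL n hn, cb_addR n hn]
  abel

lemma cb_addB (hn : ∀ i, 0 < n i) (b b' : ∀ ij : PP K, ZMod (dd n ij)) (p) :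
    cb n (b + b') p = cb n b p + cb n b' p := by
  rw [cb, cb, cb, ← Finset.sum_add_distrib]
  refine Finset.sum_congr rfl fun ij _ => ?_
  haveI : NeZero (dd n ij) := ⟨(dd_pos n hn ij).ne'⟩
  have hmod : ((b + b') ij).val ≡ (b ij).val + (b' ij).val [MOD dd n ij] := by
    show ((b ij + b' ij).val) ≡ _ [MOD dd n ij]
    rw [ZMod.val_add]
    exact Nat.mod_modEq _ _
  have hcoef : ((b + b') ij).val * (p.1 ij.1.1).val * (p.2 ij.1.2).val
      ≡ ((b ij).val + (b' ij).val) * (p.1 ij.1.1).val * (p.2 ij.1.2).val [MOD dd n ij] :=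
    (hmod.mul_right _).mul_right _
  rw [nsmul_congr (ξξ_zero n hn ij) hcoef]
  have : ((b ij).val + (b' ij).val) * (p.1 ij.1.1).val * (p.2 ij.1.2).val
      = (b ij).val * (p.1 ij.1.1).val * (p.2 ij.1.2).val
        + (b' ij).val * (p.1 ij.1.1).val * (p.2 ij.1.2).val := by ring
  rw [this, add_nsmul]

end CB


section CB2
variable {K : ℕ} (n : Fin K → ℕ)

lemma cb_single_lt (hn : ∀ i, 0 < n i) (b : ∀ ij : PP K, ZMod (dd n ij)) {i k : Fin K}
    (h : i < k) :
    cb n b (Pi.single i 1, Pi.single k 1)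
      = ((b ⟨(i, k), h⟩).val * (1 : ZMod (n i)).val * (1 : ZMod (n k)).val)
          • ξξ n ⟨(i, k), h⟩ := by
  rw [cb]
  rw [Finset.sum_eq_single_of_mem (⟨(i, k), h⟩ : PP K) (Finset.mem_univ _)]
  · simp [Pi.single_eq_same]
  · intro ij _ hne
    have hor : ij.1.1 ≠ i ∨ ij.1.2 ≠ k := by
      by_contra hcon
      push_neg at hcon
      exact hne (Subtype.ext (Prod.ext hcon.1 hcon.2))
    rcases hor with h' | h'
    · haveI : NeZero (n ij.1.1) := ⟨(hn _).ne'⟩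
      have : (Pi.single i (1 : ZMod (n i)) : ∀ i, ZMod (n i)) ij.1.1 = 0 :=
        Pi.single_eq_of_ne h' 1
      simp [this]
    · haveI : NeZero (n ij.1.2) := ⟨(hn _).ne'⟩
      have : (Pi.single k (1 : ZMod (n k)) : ∀ i, ZMod (n i)) ij.1.2 = 0 :=
        Pi.single_eq_of_ne h' 1
      simp [this]

lemma cb_single_nlt (hn : ∀ i, 0 < n i) (b : ∀ ij : PP K, ZMod (dd n ij)) {i k : Fin K}
    (h : ¬ i < k) :
    cb n b (Pi.single i 1, Pi.single k 1) = 0 := by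
  rw [cb]
  refine Finset.sum_eq_zero fun ij _ => ?_
  have hor : ij.1.1 ≠ i ∨ ij.1.2 ≠ k := by
    by_contra hcon
    push_neg at hcon
    exact h (hcon.1 ▸ hcon.2 ▸ ij.2)
  rcases hor with h' | h'
  · haveI : NeZero (n ij.1.1) := ⟨(hn _).ne'⟩
    have : (Pi.single i (1 : ZMod (n i)) : ∀ i, ZMod (n i)) ij.1.1 = 0 :=
      Pi.single_eq_of_ne h' 1
    simp [this]
  · haveI : NeZero (n ij.1.2) := ⟨(hn _).ne'⟩
    have : (Pi.single k (1 : ZMod (n k)) : ∀ i, ZMod (n i)) ij.1.2 = 0 :=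
      Pi.single_eq_of_ne h' 1
    simp [this]

end CB2


variable {G₀ : Type} [AddCommGroup G₀]
noncomputable abbrev AA (G₀ : Type) [AddCommGroup G₀] :=
  Rep.trivial ℤ (Multiplicative G₀) (AddCircle (1 : ℝ))

def toAdd2 (f : Multiplicative G₀ × Multiplicative G₀ → AddCircle (1 : ℝ)) :
    G₀ × G₀ → AddCircle (1 : ℝ) :=
  fun p => f (Multiplicative.ofAdd p.1, Multiplicative.ofAdd p.2)

lemma isCo_of_mem {f : Multiplicative G₀ × Multiplicative G₀ → AddCircle (1 : ℝ)}
    (hf : f ∈ cocycles₂ (AA G₀)) : IsCo (toAdd2 f) := by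
  intro g h j
  have := (mem_cocycles₂_iff (A := AA G₀) f).1 hf
    (Multiplicative.ofAdd g) (Multiplicative.ofAdd h) (Multiplicative.ofAdd j)
  exact this

lemma mem_of_isCo {f : Multiplicative G₀ × Multiplicative G₀ → AddCircle (1 : ℝ)}
    (hf : IsCo (toAdd2 f)) : f ∈ cocycles₂ (AA G₀) := by
  rw [mem_cocycles₂_iff (A := AA G₀)]
  intro g h j
  exact hf g.toAdd h.toAdd j.toAdd

lemma mem_cob_iff_isCb (f : cocycles₂ (AA G₀)) :
    f.1 ∈ coboundaries₂ (AA G₀) ↔ IsCb (toAdd2 f.1) := by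
  constructor
  · rintro ⟨x, hx⟩
    exact ⟨fun g => x (Multiplicative.ofAdd g), fun g h => congrFun hx (Multiplicative.ofAdd g,
      Multiplicative.ofAdd h)⟩
  · rintro ⟨x, hx⟩
    exact ⟨fun g => x g.toAdd, funext fun p => hx p.1.toAdd p.2.toAdd⟩


section Final
variable {K : ℕ} (n : Fin K → ℕ) (hn : ∀ i, 0 < n i)

lemma single_eq_zero_of_eq_one {i : Fin K} (h : n i = 1) :
    (Pi.single i 1 : (∀ i : Fin K, ZMod (n i))) = 0 := by
  haveI : Subsingleton (ZMod (n i)) := h ▸ (inferInstance : Subsingleton (ZMod 1))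
  have h1 : (1 : ZMod (n i)) = 0 := Subsingleton.elim _ _
  rw [h1, Pi.single_zero]

lemma nsmul_single_self (i : Fin K) : (n i) • (Pi.single i 1 : (∀ i : Fin K, ZMod (n i))) = 0 := by
  have h2 : (n i) • (1 : ZMod (n i)) = 0 := by
    rw [nsmul_eq_mul, mul_one, ZMod.natCast_self]
  have h3 := map_nsmul (AddMonoidHom.single (fun i => ZMod (n i)) i) (n i) 1
  calc (n i) • (Pi.single i 1 : ∀ i : Fin K, ZMod (n i))
      = Pi.single i ((n i) • (1 : ZMod (n i))) := h3.symm
    _ = 0 := by rw [h2, Pi.single_zero]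

/-- The cocycle associated to `b`, as an element of `twoCocycles`. -/
noncomputable def CbCocycle (b : ∀ ij : PP K, ZMod (dd n ij)) :
    cocycles₂ (AA (∀ i : Fin K, ZMod (n i))) :=
  ⟨fun p => cb n b (p.1.toAdd, p.2.toAdd), mem_of_isCo (cb_isCo n hn b)⟩

/-- The homomorphism `∏ ZMod (gcd nᵢ nⱼ) →+ H2`. -/
noncomputable def Ψ : (∀ ij : PP K, ZMod (dd n ij)) →+ groupCohomology.H2 (AA (∀ i : Fin K, ZMod (n i))) :=
  AddMonoidHom.mk' (fun b => H2π (AA (∀ i : Fin K, ZMod (n i))) (CbCocycle n hn b)) (by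
    intro b b'
    show H2π (AA (∀ i : Fin K, ZMod (n i))) (CbCocycle n hn (b + b'))
        = H2π (AA (∀ i : Fin K, ZMod (n i))) (CbCocycle n hn b)
          + H2π (AA (∀ i : Fin K, ZMod (n i))) (CbCocycle n hn b')
    rw [← map_add]
    congr 1
    apply Subtype.ext
    funext p
    exact cb_addB n hn b b' (p.1.toAdd, p.2.toAdd))

lemma Ψ_injective : Function.Injective (Ψ n hn) := by
  rw [injective_iff_map_eq_zero]
  intro b hb
  have hmem : (CbCocycle n hn b).1 ∈ coboundaries₂ (AA (∀ i : Fin K, ZMod (n i))) :=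
    (H2π_eq_zero_iff _).1 hb
  have hcb : IsCb (cb n b) := (mem_cob_iff_isCb _).1 hmem
  obtain ⟨x, hx⟩ := hcb
  have hsym : ∀ g h : (∀ i : Fin K, ZMod (n i)), cb n b (g, h) = cb n b (h, g) := by
    intro g h
    rw [← hx g h, ← hx h g, add_comm g h]
    abel
  funext ij
  obtain ⟨⟨i, k⟩, hik⟩ := ij
  by_cases h1 : n i = 1 ∨ n k = 1
  · haveI : Subsingleton (ZMod (dd n ⟨(i, k), hik⟩)) := by
      have hd1 : dd n ⟨(i, k), hik⟩ = 1 := by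
        rcases h1 with h | h
        · simp [dd, h]
        · simp [dd, h]
      exact hd1 ▸ (inferInstance : Subsingleton (ZMod 1))
    exact Subsingleton.elim _ _
  · push_neg at h1
    have hi1 : 1 < n i := by have := hn i; omega
    have hk1 : 1 < n k := by have := hn k; omega
    have hzero : cb n b ((Pi.single i 1 : ∀ i : Fin K, ZMod (n i)), (Pi.single k 1 : ∀ i : Fin K, ZMod (n i))) = 0 := by
      rw [hsym ((Pi.single i 1 : ∀ i : Fin K, ZMod (n i))) ((Pi.single k 1 : ∀ i : Fin K, ZMod (n i)))]
      exact cb_single_nlt n hn b (lt_asymm hik)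
    rw [cb_single_lt n hn b hik, ZMod.val_one'' h1.1, ZMod.val_one'' h1.2,
      mul_one, mul_one] at hzero
    haveI : NeZero (dd n ⟨(i, k), hik⟩) := ⟨(dd_pos n hn _).ne'⟩
    have hdvd : dd n ⟨(i, k), hik⟩ ∣ (b ⟨(i, k), hik⟩).val := by
      have h6 := addOrderOf_dvd_iff_nsmul_eq_zero.2 hzero
      rwa [ξξ_order n hn] at h6
    have hlt : (b ⟨(i, k), hik⟩).val < dd n ⟨(i, k), hik⟩ := ZMod.val_lt _
    have : (b ⟨(i, k), hik⟩).val = 0 := Nat.eq_zero_of_dvd_of_lt hdvd hlt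
    exact (ZMod.val_eq_zero _).1 this

lemma Ψ_surjective : Function.Surjective (Ψ n hn) := by
  intro q
  obtain ⟨f, rfl⟩ := (ModuleCat.epi_iff_surjective (H2π (AA (∀ i : Fin K, ZMod (n i))))).1
    inferInstance q
  set c : (∀ i : Fin K, ZMod (n i)) × (∀ i : Fin K, ZMod (n i)) → AddCircle (1 : ℝ) := toAdd2 f.1 with hcdef
  have hc : IsCo c := isCo_of_mem f.2
  set B := betaHom hc with hB
  -- torsion bound for the values of B at generators
  have hann : ∀ ij : PP K, (dd n ij) • B ((Pi.single ij.1.1 1 : ∀ i : Fin K, ZMod (n i))) ((Pi.single ij.1.2 1 : ∀ i : Fin K, ZMod (n i))) = 0 := by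
    intro ij
    have hi : (n ij.1.1) • B ((Pi.single ij.1.1 1 : ∀ i : Fin K, ZMod (n i))) ((Pi.single ij.1.2 1 : ∀ i : Fin K, ZMod (n i))) = 0 := by
      have h2 := congrFun (congrArg (⇑) (map_nsmul B (n ij.1.1) ((Pi.single ij.1.1 1 : ∀ i : Fin K, ZMod (n i))))) ((Pi.single ij.1.2 1 : ∀ i : Fin K, ZMod (n i)))
      simp only [AddMonoidHom.nsmul_apply] at h2
      rw [← h2, nsmul_single_self n ij.1.1, map_zero, AddMonoidHom.zero_apply]
    have hk : (n ij.1.2) • B ((Pi.single ij.1.1 1 : ∀ i : Fin K, ZMod (n i))) ((Pi.single ij.1.2 1 : ∀ i : Fin K, ZMod (n i))) = 0 := by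
      rw [← map_nsmul (B ((Pi.single ij.1.1 1 : ∀ i : Fin K, ZMod (n i)))) (n ij.1.2) ((Pi.single ij.1.2 1 : ∀ i : Fin K, ZMod (n i))), nsmul_single_self n ij.1.2,
        map_zero]
    have hgcd := Nat.gcd_eq_gcd_ab (n ij.1.1) (n ij.1.2)
    have hz : ((dd n ij : ℕ) : ℤ) • B ((Pi.single ij.1.1 1 : ∀ i : Fin K, ZMod (n i))) ((Pi.single ij.1.2 1 : ∀ i : Fin K, ZMod (n i))) = 0 := by
      rw [show ((dd n ij : ℕ) : ℤ) = (n ij.1.1) * Nat.gcdA (n ij.1.1) (n ij.1.2)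
          + (n ij.1.2) * Nat.gcdB (n ij.1.1) (n ij.1.2) from hgcd, add_zsmul,
        mul_comm ((n ij.1.1 : ℤ)) (Nat.gcdA (n ij.1.1) (n ij.1.2)),
        mul_comm ((n ij.1.2 : ℤ)) (Nat.gcdB (n ij.1.1) (n ij.1.2)),
        mul_zsmul, mul_zsmul, natCast_zsmul, natCast_zsmul, hi, hk, smul_zero, smul_zero,
        add_zero]
    rw [← natCast_zsmul]
    exact hz
  have hrep : ∀ ij : PP K, ∃ z : ℤ, B ((Pi.single ij.1.1 1 : ∀ i : Fin K, ZMod (n i))) ((Pi.single ij.1.2 1 : ∀ i : Fin K, ZMod (n i))) = z • ξξ n ij :=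
    fun ij => torsion_rep (dd_pos n hn ij) (hann ij)
  choose z hz using hrep
  set b : ∀ ij : PP K, ZMod (dd n ij) := fun ij => ((z ij : ℤ) : ZMod (dd n ij)) with hbdef
  -- key: (b ij).val • ξξ = B δi δk
  have hbval : ∀ ij : PP K, ((b ij).val : ℕ) • ξξ n ij = B ((Pi.single ij.1.1 1 : ∀ i : Fin K, ZMod (n i))) ((Pi.single ij.1.2 1 : ∀ i : Fin K, ZMod (n i))) := by
    intro ij
    haveI : NeZero (dd n ij) := ⟨(dd_pos n hn ij).ne'⟩
    have hcongr : ((b ij).val : ℤ) ≡ z ij [ZMOD (dd n ij)] := by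
      have : (((b ij).val : ℤ) : ZMod (dd n ij)) = ((z ij : ℤ) : ZMod (dd n ij)) := by
        push_cast
        rw [ZMod.natCast_val, ZMod.cast_id]
      exact (ZMod.intCast_eq_intCast_iff _ _ _).1 this
    rw [← natCast_zsmul, zsmul_congr (ξξ_zero n hn ij) hcongr, ← hz ij]
  -- the two bi-additive forms agree
  have hBcb : B = betaHom (cb_isCo n hn b) := by
    apply pi_bihom_ext hn
    intro i k
    have hself : ∀ {cc : (∀ i : Fin K, ZMod (n i)) × (∀ i : Fin K, ZMod (n i)) → AddCircle (1 : ℝ)} (hcc : IsCo cc) (g : (∀ i : Fin K, ZMod (n i))),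
        betaHom hcc g g = 0 := by
      intro cc hcc g
      rw [betaHom_apply, sub_self]
    have hanti : ∀ {cc : (∀ i : Fin K, ZMod (n i)) × (∀ i : Fin K, ZMod (n i)) → AddCircle (1 : ℝ)} (hcc : IsCo cc) (g h : (∀ i : Fin K, ZMod (n i))),
        betaHom hcc g h = -(betaHom hcc h g) := by
      intro cc hcc g h
      rw [betaHom_apply, betaHom_apply, neg_sub]
    have main : ∀ (i k : Fin K), i < k →
        B ((Pi.single i 1 : ∀ i : Fin K, ZMod (n i))) ((Pi.single k 1 : ∀ i : Fin K, ZMod (n i))) = betaHom (cb_isCo n hn b) ((Pi.single i 1 : ∀ i : Fin K, ZMod (n i))) ((Pi.single k 1 : ∀ i : Fin K, ZMod (n i))) := by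
      intro i k hik
      rw [betaHom_apply, betaHom_apply, cb_single_nlt n hn b (lt_asymm hik), sub_zero,
        cb_single_lt n hn b hik]
      by_cases h1 : n i = 1 ∨ n k = 1
      · have hzero : B (Pi.single i 1 : ∀ i : Fin K, ZMod (n i)) (Pi.single k 1 : ∀ i : Fin K, ZMod (n i)) = 0 := by
          rcases h1 with h | h
          · rw [single_eq_zero_of_eq_one n h, map_zero, AddMonoidHom.zero_apply]
          · rw [single_eq_zero_of_eq_one n h, map_zero]
        have hd1 : dd n ⟨(i, k), hik⟩ = 1 := by
          rcases h1 with h | h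
          · simp [dd, h]
          · simp [dd, h]
        haveI : Subsingleton (ZMod (dd n ⟨(i, k), hik⟩)) :=
          hd1 ▸ (inferInstance : Subsingleton (ZMod 1))
        have hb0 : (b ⟨(i, k), hik⟩).val = 0 := by
          rw [Subsingleton.elim (b ⟨(i, k), hik⟩) 0]
          haveI : NeZero (dd n ⟨(i, k), hik⟩) := ⟨(dd_pos n hn _).ne'⟩
          exact ZMod.val_zero
        have hzero' : c ((Pi.single i 1 : ∀ i : Fin K, ZMod (n i)),
              (Pi.single k 1 : ∀ i : Fin K, ZMod (n i)))
            - c ((Pi.single k 1 : ∀ i : Fin K, ZMod (n i)),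
              (Pi.single i 1 : ∀ i : Fin K, ZMod (n i))) = 0 := by
          rw [← betaHom_apply hc]
          exact hzero
        rw [hzero', hb0, zero_mul, zero_mul, zero_nsmul]
      · push_neg at h1
        have hi1 : 1 < n i := by have := hn i; omega
        have hk1 : 1 < n k := by have := hn k; omega
        rw [ZMod.val_one'' h1.1, ZMod.val_one'' h1.2, mul_one, mul_one, hbval ⟨(i, k), hik⟩]
        exact (betaHom_apply hc _ _).symm
    rcases lt_trichotomy i k with h | h | h
    · exact main i k h
    · rw [h, hself hc, hself (cb_isCo n hn b)]
    · rw [hanti hc, hanti (cb_isCo n hn b), main k i h]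
  -- conclude: `c - cb n b` is a symmetric cocycle, hence a coboundary
  have hsymdiff : ∀ u v : (∀ i : Fin K, ZMod (n i)),
      (c - cb n b) (u, v) = (c - cb n b) (v, u) := by
    intro u v
    have h1 : B u v = betaHom (cb_isCo n hn b) u v := by rw [hBcb]
    rw [betaHom_apply, betaHom_apply] at h1
    simp only [Pi.sub_apply]
    have h2 : c (u, v) - cb n b (u, v) - (c (v, u) - cb n b (v, u))
        = (c (u, v) - c (v, u)) - (cb n b (u, v) - cb n b (v, u)) := by abel
    have h3 : c (u, v) - cb n b (u, v) - (c (v, u) - cb n b (v, u)) = 0 := by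
      rw [h2, h1, sub_self]
    exact sub_eq_zero.1 h3
  have hdiffCb : IsCb (c - cb n b) :=
    pi_isCb K n hn (c - cb n b) (isCo_sub hc (cb_isCo n hn b)) hsymdiff
  have hmem : (f - CbCocycle n hn b).1 ∈ coboundaries₂ (AA (∀ i : Fin K, ZMod (n i))) := by
    rw [mem_cob_iff_isCb]
    exact hdiffCb
  refine ⟨b, ?_⟩
  have h5 := (H2π_eq_iff f (CbCocycle n hn b)).2 hmem
  exact h5.symm

end Final

end S18

/-- for `G = ∏_{i=1}^K ℤ/n_iℤ`, the second group cohomology of `G` with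
coefficients in the circle group `ℝ/ℤ` (trivial action) is isomorphic as an abelian group
to `∏_{i<j} ℤ/gcd(n_i,n_j)ℤ`. -/
theorem statement18 (K : ℕ) (n : Fin K → ℕ) (hn : ∀ i, 0 < n i) :
    Nonempty
      ((groupCohomology.H2
          (Rep.trivial ℤ (Multiplicative (∀ i : Fin K, ZMod (n i))) (AddCircle (1 : ℝ)))) ≃+
        (∀ ij : {q : Fin K × Fin K // q.1 < q.2}, ZMod (Nat.gcd (n ij.1.1) (n ij.1.2)))) := by
  exact ⟨(AddEquiv.ofBijective (S18.Ψ n hn)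
    ⟨S18.Ψ_injective n hn, S18.Ψ_surjective n hn⟩).symm⟩
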